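/- Let G = (V,E) be a P(2,1)-graph containing a vertex v with d(v) = 3 and |N(v)| > 1. Then v is admissible: there exist two distinct vertices u, w ∈ N(v) such that the multigraph obtained from G − v by adding one new edge with endpoints u and w is a P(2,1)-graph. -/

import Mathlib

/-! ### Multigraphs: finite vertex set `V`, finite edge set `E`; each edge `e` has
endpoints `src e` and `dst e` (loops and parallel edges are allowed). -/

structure Multigraph (V E : Type) where
  src : E → V
  dst : E → V

namespace Multigraph

variable {V E : Type}

/-- `i(X)`: the number of edges both of whose endpoints lie in `X`. -/
def iCount [Fintype E] [DecidableEq V] (G : Multigraph V E) (X : Finset V) : ℕ :=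
  (Finset.univ.filter fun e => G.src e ∈ X ∧ G.dst e ∈ X).card

/-- The degree of a vertex (a loop contributes 2). -/
def degree [Fintype E] [DecidableEq V] (G : Multigraph V E) (v : V) : ℕ :=
  (Finset.univ.filter fun e => G.src e = v).card +
    (Finset.univ.filter fun e => G.dst e = v).card

/-- The set of neighbours of a vertex. -/
def neighborSet (G : Multigraph V E) (v : V) : Set V :=
  {w | ∃ e, (G.src e = v ∧ G.dst e = w) ∨ (G.src e = w ∧ G.dst e = v)}

/-- `(k,ℓ)`-sparsity: `i(X) ≤ k|X| − ℓ` for every `X ⊆ V` spanning at least one edge. -/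
def Sparse [Fintype E] [DecidableEq V] (G : Multigraph V E) (k l : ℤ) : Prop :=
  ∀ X : Finset V, (∃ e, G.src e ∈ X ∧ G.dst e ∈ X) →
    (G.iCount X : ℤ) ≤ k * (X.card : ℤ) - l

/-- `(k,ℓ)`-tightness: `(k,ℓ)`-sparse and `|E| = k|V| − ℓ`. -/
def Tight [Fintype V] [Fintype E] [DecidableEq V] (G : Multigraph V E) (k l : ℤ) : Prop :=
  G.Sparse k l ∧ (Fintype.card E : ℤ) = k * (Fintype.card V : ℤ) - l

/-- Delete a single edge. -/
def deleteEdge (G : Multigraph V E) (e₀ : E) : Multigraph V {e : E // e ≠ e₀} :=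
  ⟨fun e => G.src e.1, fun e => G.dst e.1⟩

/-- Delete a vertex together with all edges incident to it. -/
def deleteVertex (G : Multigraph V E) (v : V) :
    Multigraph {w : V // w ≠ v} {e : E // G.src e ≠ v ∧ G.dst e ≠ v} :=
  ⟨fun e => ⟨G.src e.1, e.2.1⟩, fun e => ⟨G.dst e.1, e.2.2⟩⟩

/-- Add one new edge with endpoints `u` and `w`. -/
def addEdge (G : Multigraph V E) (u w : V) : Multigraph V (E ⊕ Unit) :=
  ⟨Sum.elim G.src fun _ => u, Sum.elim G.dst fun _ => w⟩

/-- The subgraph induced by a set of vertices `X`. -/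
def induce (G : Multigraph V E) (X : Finset V) :
    Multigraph {v : V // v ∈ X} {e : E // G.src e ∈ X ∧ G.dst e ∈ X} :=
  ⟨fun e => ⟨G.src e.1, e.2.1⟩, fun e => ⟨G.dst e.1, e.2.2⟩⟩

/-- `G` is a `P(2,1)`-graph: `(2,1)`-tight and some edge-deleted graph is `(2,2)`-tight. -/
def IsP21 [Fintype V] [Fintype E] [DecidableEq V] [DecidableEq E] (G : Multigraph V E) : Prop :=
  G.Tight 2 1 ∧ ∃ e : E, (G.deleteEdge e).Tight 2 2

/-- `G` is a `(2,2)`-circuit: `|E| = 2|V| − 1` and every edge-deleted graph is `(2,2)`-tight. -/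
def IsCircuit22 [Fintype V] [Fintype E] [DecidableEq V] [DecidableEq E]
    (G : Multigraph V E) : Prop :=
  (Fintype.card E : ℤ) = 2 * (Fintype.card V : ℤ) - 1 ∧
    ∀ e : E, (G.deleteEdge e).Tight 2 2

/-- `X` is an over-critical set (`i(X) = 2|X| − 1`) of minimum cardinality. -/
def IsMinOverCritical [Fintype E] [DecidableEq V] (G : Multigraph V E) (X : Finset V) : Prop :=
  (G.iCount X : ℤ) = 2 * (X.card : ℤ) - 1 ∧
    ∀ Y : Finset V, (G.iCount Y : ℤ) = 2 * (Y.card : ℤ) - 1 → X.card ≤ Y.card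

/-- `G` is (a copy of) `K₂³`: two distinct vertices joined by three parallel edges. -/
def IsK23 [Fintype E] (G : Multigraph V E) : Prop :=
  ∃ a b : V, a ≠ b ∧ (∀ v : V, v = a ∨ v = b) ∧ Fintype.card E = 3 ∧
    ∀ e : E, (G.src e = a ∧ G.dst e = b) ∨ (G.src e = b ∧ G.dst e = a)

/-- Adjacency via an edge belonging to the edge subset `F`. -/
def AdjOn (G : Multigraph V E) (F : Set E) (u w : V) : Prop :=
  ∃ e ∈ F, (G.src e = u ∧ G.dst e = w) ∨ (G.src e = w ∧ G.dst e = u)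

/-- Connectivity of the multigraph. -/
def Connected (G : Multigraph V E) : Prop :=
  Nonempty V ∧ ∀ u w : V, Relation.ReflTransGen (G.AdjOn Set.univ) u w

/-- 2-edge-connectivity: connected, and still connected after deleting any one edge. -/
def TwoEdgeConnected (G : Multigraph V E) : Prop :=
  G.Connected ∧ ∀ e₀ : E, ∀ u w : V, Relation.ReflTransGen (G.AdjOn {e | e ≠ e₀}) u w

/-- Adjacency inside the induced subgraph on the vertex set `X`. -/
def AdjIn (G : Multigraph V E) (X : Set V) (u w : V) : Prop :=
  u ∈ X ∧ w ∈ X ∧ ∃ e, (G.src e = u ∧ G.dst e = w) ∨ (G.src e = w ∧ G.dst e = u)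

/-- Connectivity of the induced subgraph on the vertex set `X`. -/
def ConnectedOn (G : Multigraph V E) (X : Set V) : Prop :=
  ∀ u ∈ X, ∀ w ∈ X, Relation.ReflTransGen (G.AdjIn X) u w

/-- `T` is the edge set of a spanning tree of `G`:
the spanning subgraph with edge set `T` is connected and `|T| = |V| − 1`. -/
def IsSpanningTree [Fintype V] (G : Multigraph V E) (T : Finset E) : Prop :=
  (∀ u w : V, Relation.ReflTransGen (G.AdjOn (T : Set E)) u w) ∧ T.card + 1 = Fintype.card V

/-- `M` is the edge set of a spanning connected map-graph of `G`:
the spanning subgraph with edge set `M` is connected and has exactly `|V|` edges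
(equivalently, it is connected with exactly one cycle). -/
def IsConnectedSpanningMapGraph [Fintype V] (G : Multigraph V E) (M : Finset E) : Prop :=
  (∀ u w : V, Relation.ReflTransGen (G.AdjOn (M : Set E)) u w) ∧ M.card = Fintype.card V

/-- `(X, F)` describes a subgraph of `G`: every edge of `F` has both endpoints in `X`. -/
def IsSubgraphOn (G : Multigraph V E) (X : Finset V) (F : Finset E) : Prop :=
  ∀ e ∈ F, G.src e ∈ X ∧ G.dst e ∈ X

end Multigraph

/-!
Call `X` critical when `i(X) = 2|X| - 1`. In a `(2,1)`-sparse graph, supermodularity of `i` makes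
the union and intersection of two meeting critical sets critical, so a `(2,1)`-tight graph is
`P(2,1)` exactly when its critical sets pairwise meet, i.e. when it has a least critical set `C`.

A loop at `v` would make `{v}` and `V - v` disjoint critical sets, so the three edges at `v` are
proper. Splitting `v` off along `ab` then gives a `P(2,1)`-graph as soon as no critical set of
`G - v` contains `a, b` and every `(2,2)`-tight set of `G - v` through `a, b` meets every critical
set of `G - v`. If `v ∈ C` there are no critical sets in `G - v` and any two neighbours work.
Otherwise let `M` be the largest critical set avoiding `v`: some neighbour `a` lies outside `M`,
since otherwise `M + v` would span too many edges, so no critical set of `G - v` contains `a`.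
Write `N(v) ⊆ {a, b, c}`. If both `ab` and `ac` failed, the two obstructing `(2,2)`-tight sets
would share `a` and avoid `C`, so their intersection is not critical and, by supermodularity,
their union `W` satisfies `i(W) ≥ 2|W| - 2`. Then `W + v` is critical without containing `C`.
-/

theorem Set.exists_mem_ne_subset_of_ncard_le_three {α : Type*} [Finite α] {S : Set α}
    (hS : S.ncard ≤ 3) {a b : α} (ha : a ∈ S) (hb : b ∈ S) (hab : a ≠ b) :
    ∃ c ∈ S, c ≠ a ∧ S ⊆ {a, b, c} := by
  by_cases h : ∃ c ∈ S, c ≠ a ∧ c ≠ b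
  · obtain ⟨c, hc, hca, hcb⟩ := h
    refine ⟨c, hc, hca, (Set.eq_of_subset_of_ncard_le ?_ ?_).symm.subset⟩
    · exact Set.insert_subset ha (Set.insert_subset hb (Set.singleton_subset_iff.2 hc))
    · rwa [Set.ncard_eq_three.2 ⟨a, b, c, hab, hca.symm, hcb.symm, rfl⟩]
  · push Not at h
    refine ⟨b, hb, hab.symm, fun x hx => ?_⟩
    by_cases hxa : x = a
    · exact Or.inl hxa
    · exact Or.inr (Or.inl (h x hx hxa))

theorem Finset.ne_of_mem_map_subtype {α : Type*} {v x : α} {X : Finset {a // a ≠ v}}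
    (hx : x ∈ X.map (Function.Embedding.subtype _)) : x ≠ v := by
  obtain ⟨a, -, rfl⟩ := Finset.mem_map.1 hx
  exact a.2

namespace Multigraph

variable {V E : Type}

section Counting

variable [Fintype E] [DecidableEq V] (G : Multigraph V E)

theorem iCount_pos_iff {X : Finset V} :
    0 < G.iCount X ↔ ∃ e, G.src e ∈ X ∧ G.dst e ∈ X := by
  simp [iCount, Finset.card_pos, Finset.filter_nonempty_iff]

theorem iCount_univ [Fintype V] : G.iCount Finset.univ = Fintype.card E := by
  simp [iCount]

theorem iCount_add_iCount_le (X Y : Finset V) :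
    G.iCount X + G.iCount Y ≤ G.iCount (X ∪ Y) + G.iCount (X ∩ Y) := by
  classical
  unfold iCount
  rw [← Finset.card_union_add_card_inter, ← Finset.filter_and]
  gcongr ?_ + ?_
  · refine Finset.card_le_card fun e => ?_
    simp only [Finset.mem_union, Finset.mem_filter, Finset.mem_univ, true_and]
    tauto
  · refine Finset.card_le_card fun e => ?_
    simp +contextual

theorem iCount_deleteEdge [DecidableEq E] (e₀ : E) (X : Finset V) :
    (G.deleteEdge e₀).iCount X + (if G.src e₀ ∈ X ∧ G.dst e₀ ∈ X then 1 else 0) =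
      G.iCount X := by
  rw [iCount, iCount, Finset.card_filter, Finset.card_filter,
    Fintype.sum_eq_add_sum_subtype_ne _ e₀, add_comm]
  rfl

theorem iCount_addEdge (u w : V) (X : Finset V) :
    (G.addEdge u w).iCount X = G.iCount X + (if u ∈ X ∧ w ∈ X then 1 else 0) := by
  rw [iCount, iCount, Finset.card_filter, Finset.card_filter, Fintype.sum_sum_type]
  rfl

theorem iCount_deleteVertex (v : V) (X : Finset {w // w ≠ v}) :
    (G.deleteVertex v).iCount X = G.iCount (X.map (Function.Embedding.subtype _)) := by
  refine Finset.card_bij (fun e _ => e.1) ?_ (fun _ _ _ _ => Subtype.ext) ?_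
  · intro e he
    simp only [Finset.mem_filter, Finset.mem_univ, true_and] at he ⊢
    exact ⟨(Finset.mem_map' _).2 he.1, (Finset.mem_map' _).2 he.2⟩
  · intro e he
    simp only [Finset.mem_filter, Finset.mem_univ, true_and] at he
    refine ⟨⟨e, Finset.ne_of_mem_map_subtype he.1, Finset.ne_of_mem_map_subtype he.2⟩, ?_,
      rfl⟩
    simp only [Finset.mem_filter, Finset.mem_univ, true_and]
    exact ⟨(Finset.mem_map' (Function.Embedding.subtype _)).1 he.1,
      (Finset.mem_map' (Function.Embedding.subtype _)).1 he.2⟩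

end Counting

section Critical

variable [Fintype E] [DecidableEq V] {G : Multigraph V E} {X Y : Finset V}

theorem Sparse.iCount_le {k l : ℤ} (h : G.Sparse k l) (hX : l ≤ k * X.card) :
    (G.iCount X : ℤ) ≤ k * X.card - l := by
  by_cases hspan : ∃ e, G.src e ∈ X ∧ G.dst e ∈ X
  · exact h X hspan
  · rw [← G.iCount_pos_iff, not_lt, Nat.le_zero] at hspan
    rw [hspan]
    omega

theorem Sparse.iCount_le_of_nonempty (h : G.Sparse 2 1) (hX : X.Nonempty) :
    (G.iCount X : ℤ) ≤ 2 * X.card - 1 :=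
  h.iCount_le (by have := hX.card_pos; omega)

variable (G) in
def IsCritical (X : Finset V) : Prop :=
  (G.iCount X : ℤ) = 2 * X.card - 1

variable (G) in
def CriticalIntersecting : Prop :=
  ∀ X Y, G.IsCritical X → G.IsCritical Y → (X ∩ Y).Nonempty

theorem IsCritical.iCount_pos (h : G.IsCritical X) : 0 < G.iCount X := by
  rcases X.eq_empty_or_nonempty with rfl | hX
  · simp [IsCritical, iCount] at h
  · unfold IsCritical at h
    have := hX.card_pos
    omega

theorem IsCritical.nonempty (h : G.IsCritical X) : X.Nonempty := by
  obtain ⟨e, he, -⟩ := G.iCount_pos_iff.1 h.iCount_pos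
  exact ⟨_, he⟩

theorem IsCritical.inter_union (hsp : G.Sparse 2 1) (hX : G.IsCritical X)
    (hY : G.IsCritical Y) (hXY : (X ∩ Y).Nonempty) :
    G.IsCritical (X ∩ Y) ∧ G.IsCritical (X ∪ Y) := by
  have hsuper := G.iCount_add_iCount_le X Y
  have hcard := Finset.card_union_add_card_inter X Y
  have hinter := hsp.iCount_le_of_nonempty hXY
  have hunion := hsp.iCount_le_of_nonempty (hX.nonempty.mono (Finset.subset_union_left (s₂ := Y)))
  unfold IsCritical at *
  omega

theorem le_iCount_union (hsp : G.Sparse 2 1)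
    (hX : 2 * (X.card : ℤ) - 2 ≤ G.iCount X) (hY : 2 * (Y.card : ℤ) - 2 ≤ G.iCount Y)
    (hXY : (X ∩ Y).Nonempty) (hnc : ¬ G.IsCritical (X ∩ Y)) :
    2 * ((X ∪ Y).card : ℤ) - 2 ≤ G.iCount (X ∪ Y) := by
  have hsuper := G.iCount_add_iCount_le X Y
  have hcard := Finset.card_union_add_card_inter X Y
  have hinter := hsp.iCount_le_of_nonempty hXY
  unfold IsCritical at hnc
  omega

theorem exists_isCritical_subset_forall [Fintype V] (hT : G.Tight 2 1)
    (hmeet : G.CriticalIntersecting) :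
    ∃ C, G.IsCritical C ∧ ∀ X, G.IsCritical X → C ⊆ X := by
  classical
  have huniv : G.IsCritical Finset.univ := by
    simpa [IsCritical, iCount_univ] using hT.2
  let crit := Finset.univ.filter G.IsCritical
  have hne : crit.Nonempty := ⟨_, Finset.mem_filter.2 ⟨Finset.mem_univ _, huniv⟩⟩
  refine ⟨crit.inf' hne id, ?_, fun X hX => Finset.inf'_le id (by simpa [crit] using hX)⟩
  refine Finset.inf'_mem {X | G.IsCritical X} (fun X hX Y hY => ?_) crit hne id
    (fun X hX => (Finset.mem_filter.1 hX).2)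
  exact (hX.inter_union hT.1 hY (hmeet X Y hX hY)).1

theorem exists_isCritical_forall_subset_of_notMem [Fintype V] (hsp : G.Sparse 2 1)
    (hmeet : G.CriticalIntersecting) {v : V} (h₀ : ∃ Y, G.IsCritical Y ∧ v ∉ Y) :
    ∃ M, G.IsCritical M ∧ v ∉ M ∧ ∀ Y, G.IsCritical Y → v ∉ Y → Y ⊆ M := by
  classical
  let avoiding := Finset.univ.filter fun Y => G.IsCritical Y ∧ v ∉ Y
  have hne : avoiding.Nonempty := by
    obtain ⟨Y, hY⟩ := h₀
    exact ⟨Y, Finset.mem_filter.2 ⟨Finset.mem_univ _, hY⟩⟩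
  obtain ⟨hM, hvM⟩ : G.IsCritical (avoiding.sup' hne id) ∧ v ∉ avoiding.sup' hne id := by
    refine Finset.sup'_mem {Y | G.IsCritical Y ∧ v ∉ Y} (fun X hX Y hY => ?_) avoiding hne id
      (fun Y hY => (Finset.mem_filter.1 hY).2)
    exact ⟨(hX.1.inter_union hsp hY.1 (hmeet X Y hX.1 hY.1)).2, by simpa using ⟨hX.2, hY.2⟩⟩
  exact ⟨_, hM, hvM, fun Y hY hvY =>
    Finset.le_sup' id (by simpa [avoiding] using ⟨hY, hvY⟩)⟩

theorem isP21_iff [Fintype V] [DecidableEq E] :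
    G.IsP21 ↔ G.Tight 2 1 ∧ G.CriticalIntersecting := by
  constructor
  · rintro ⟨hT, e₀, hsp₀, -⟩
    have hspans : ∀ X, G.IsCritical X → G.src e₀ ∈ X ∧ G.dst e₀ ∈ X := by
      intro X hX
      by_contra h
      have hdel := G.iCount_deleteEdge e₀ X
      rw [if_neg h, add_zero] at hdel
      have hpos := hX.iCount_pos
      rw [← hdel] at hpos
      have := hsp₀ X ((iCount_pos_iff _).1 hpos)
      unfold IsCritical at hX
      omega
    exact ⟨hT, fun X Y hX hY =>
      ⟨G.src e₀, Finset.mem_inter.2 ⟨(hspans X hX).1, (hspans Y hY).1⟩⟩⟩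
  · rintro ⟨hT, hmeet⟩
    obtain ⟨C, hC, hCmin⟩ := exists_isCritical_subset_forall hT hmeet
    obtain ⟨e₀, he₀⟩ := G.iCount_pos_iff.1 hC.iCount_pos
    refine ⟨hT, e₀, fun X ⟨e, he⟩ => ?_, ?_⟩
    · have hdel := G.iCount_deleteEdge e₀ X
      have hle := hT.1 X ⟨e.1, he⟩
      by_cases hX : G.IsCritical X
      · rw [if_pos ⟨hCmin X hX he₀.1, hCmin X hX he₀.2⟩] at hdel
        unfold IsCritical at hX
        omega
      · unfold IsCritical at hX
        split_ifs at hdel <;> omega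
    · have hdel := G.iCount_deleteEdge e₀ Finset.univ
      rw [iCount_univ, iCount_univ, if_pos ⟨Finset.mem_univ _, Finset.mem_univ _⟩] at hdel
      have := hT.2
      omega

end Critical

section Vertex

variable [Fintype E] [DecidableEq V] (G : Multigraph V E) (v : V)

def incidenceFinset : Finset E :=
  Finset.univ.filter fun e => G.src e = v ∨ G.dst e = v

theorem card_incidenceFinset_add_iCount_singleton :
    (G.incidenceFinset v).card + G.iCount {v} = G.degree v := by
  classical
  simp only [iCount, Finset.mem_singleton]
  rw [Finset.filter_and, incidenceFinset, Finset.filter_or, Finset.card_union_add_card_inter,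
    degree]

theorem iCount_erase_add_card_incidenceFinset [Fintype V] :
    G.iCount (Finset.univ.erase v) + (G.incidenceFinset v).card = Fintype.card E := by
  rw [add_comm, ← Finset.card_univ, ← Finset.card_filter_add_card_filter_not (s := Finset.univ)
    (fun e => G.src e = v ∨ G.dst e = v)]
  congr 1
  rw [iCount]
  congr 1
  ext e
  simp [not_or]

theorem iCount_insert_of_neighborSet_subset {W : Finset V} (hv : v ∉ W)
    (hN : G.neighborSet v ⊆ W) :
    G.iCount (insert v W) = G.iCount W + (G.incidenceFinset v).card := by
  classical
  rw [iCount, iCount, incidenceFinset, ← Finset.card_union_of_disjoint]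
  · congr 1
    ext e
    simp only [Finset.mem_filter, Finset.mem_univ, true_and, Finset.mem_union, Finset.mem_insert]
    constructor
    · tauto
    · rintro (h | h | h)
      · exact ⟨Or.inr h.1, Or.inr h.2⟩
      · exact ⟨Or.inl h, Or.inr (hN ⟨e, Or.inl ⟨h, rfl⟩⟩)⟩
      · exact ⟨Or.inr (hN ⟨e, Or.inr ⟨rfl, h⟩⟩), Or.inl h⟩
  · rw [Finset.disjoint_filter]
    rintro e - ⟨hs, hd⟩ (h | h)
    · exact hv (h ▸ hs)
    · exact hv (h ▸ hd)

theorem ncard_neighborSet_le_degree : (G.neighborSet v).ncard ≤ G.degree v := by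
  classical
  let out := (Finset.univ.filter fun e => G.src e = v).image G.dst
  let into := (Finset.univ.filter fun e => G.dst e = v).image G.src
  have hsub : G.neighborSet v ⊆ ↑(out ∪ into) := by
    rintro w ⟨e, ⟨hs, hd⟩ | ⟨hs, hd⟩⟩
    · exact Finset.mem_union_left _ (Finset.mem_image.2 ⟨e, by simpa using hs, hd⟩)
    · exact Finset.mem_union_right _ (Finset.mem_image.2 ⟨e, by simpa using hd, hs⟩)
  calc (G.neighborSet v).ncard ≤ (out ∪ into).card := by
        rw [← Set.ncard_coe_finset]
        exact Set.ncard_le_ncard hsub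
    _ ≤ G.degree v := (Finset.card_union_le _ _).trans
        (add_le_add Finset.card_image_le Finset.card_image_le)

theorem notMem_neighborSet_self (h : G.iCount {v} = 0) : v ∉ G.neighborSet v := by
  rintro ⟨e, he | he⟩ <;>
    exact (G.iCount_pos_iff.2 ⟨e, by simp [he.1, he.2]⟩).ne' h

end Vertex

section Neighbors

variable [Fintype E] [DecidableEq V] {G : Multigraph V E} {v : V}

theorem iCount_singleton_eq_zero [Fintype V] (hT : G.Tight 2 1)
    (hmeet : G.CriticalIntersecting) (hdeg : G.degree v = 3) : G.iCount {v} = 0 := by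
  by_contra h
  have hloops := hT.1.iCount_le (X := {v}) (by simp)
  rw [Finset.card_singleton] at hloops
  have hinc := G.card_incidenceFinset_add_iCount_singleton v
  have hrest := G.iCount_erase_add_card_incidenceFinset v
  have hcard := Finset.card_erase_add_one (Finset.mem_univ v)
  have hcount := hT.2
  rw [Finset.card_univ] at hcard
  have hv : G.IsCritical {v} := by
    unfold IsCritical
    rw [Finset.card_singleton]
    omega
  have hrestCrit : G.IsCritical (Finset.univ.erase v) := by
    unfold IsCritical
    omega
  obtain ⟨w, hw⟩ := hmeet _ _ hv hrestCrit
  simp at hw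

theorem exists_mem_neighborSet_notMem (hsp : G.Sparse 2 1)
    (hinc : 3 ≤ (G.incidenceFinset v).card) {M : Finset V} (hM : G.IsCritical M) (hv : v ∉ M) :
    ∃ a ∈ G.neighborSet v, a ∉ M := by
  by_contra! hN
  have hins := G.iCount_insert_of_neighborSet_subset v hv hN
  have hle := hsp.iCount_le_of_nonempty (Finset.insert_nonempty v M)
  rw [Finset.card_insert_of_notMem hv, hins] at hle
  unfold IsCritical at hM
  push_cast at hle
  omega

theorem isCritical_insert (hsp : G.Sparse 2 1) (hinc : (G.incidenceFinset v).card = 3)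
    {W : Finset V} (hv : v ∉ W) (hN : G.neighborSet v ⊆ W)
    (hW : 2 * (W.card : ℤ) - 2 ≤ G.iCount W) : G.IsCritical (insert v W) := by
  have hins := G.iCount_insert_of_neighborSet_subset v hv hN
  have hle := hsp.iCount_le_of_nonempty (Finset.insert_nonempty v W)
  unfold IsCritical
  rw [Finset.card_insert_of_notMem hv] at hle ⊢
  rw [hins, hinc] at hle ⊢
  push_cast at hle ⊢
  omega

end Neighbors

section SplitOff

variable [Fintype E] [DecidableEq V] {G : Multigraph V E} {v : V}

/-- Sufficient conditions, on vertex sets avoiding `v`, for `(G - v) + ab` to be `P(2,1)`. -/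
structure IsAdmissiblePair (G : Multigraph V E) (v a b : V) : Prop where
  not_isCritical : ∀ Y, v ∉ Y → a ∈ Y → b ∈ Y → ¬ G.IsCritical Y
  inter_nonempty : ∀ Y P, v ∉ Y → v ∉ P → a ∈ Y → b ∈ Y →
    (G.iCount Y : ℤ) = 2 * Y.card - 2 → G.IsCritical P → (Y ∩ P).Nonempty

theorem iCount_splitOff (u w : {a // a ≠ v}) (X : Finset {a // a ≠ v}) :
    ((G.deleteVertex v).addEdge u w).iCount X =
      G.iCount (X.map (Function.Embedding.subtype _)) + if u ∈ X ∧ w ∈ X then 1 else 0 := by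
  rw [iCount_addEdge, iCount_deleteVertex]

theorem tight_splitOff [Fintype V] (hT : G.Tight 2 1) (hinc : (G.incidenceFinset v).card = 3)
    {u w : {a // a ≠ v}}
    (hadm : ∀ Y, v ∉ Y → u.1 ∈ Y → w.1 ∈ Y → ¬ G.IsCritical Y) :
    ((G.deleteVertex v).addEdge u w).Tight 2 1 := by
  constructor
  · rintro X ⟨e, he, -⟩
    rw [iCount_splitOff]
    have hle := hT.1.iCount_le_of_nonempty (X := X.map (Function.Embedding.subtype _))
      (Finset.map_nonempty.2 ⟨_, he⟩)
    rw [Finset.card_map] at hle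
    split_ifs with h
    · have hnc := hadm _ (fun h => Finset.ne_of_mem_map_subtype h rfl)
        ((Finset.mem_map' _).2 h.1) ((Finset.mem_map' _).2 h.2)
      unfold IsCritical at hnc
      rw [Finset.card_map] at hnc
      push_cast
      omega
    · simpa using hle
  · have huniv : (Finset.univ : Finset {a // a ≠ v}).map (Function.Embedding.subtype _) =
        Finset.univ.erase v := by
      rw [Finset.univ_map_subtype, Finset.filter_ne']
    have hE := G.iCount_erase_add_card_incidenceFinset v
    have hV := Finset.card_erase_add_one (Finset.mem_univ v)
    have hcount := hT.2
    rw [← iCount_univ ((G.deleteVertex v).addEdge u w), iCount_splitOff, huniv,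
      if_pos ⟨Finset.mem_univ _, Finset.mem_univ _⟩, ← Finset.card_univ,
      ← Finset.card_map (Function.Embedding.subtype _), huniv]
    rw [Finset.card_univ] at hV
    push_cast
    omega

theorem criticalIntersecting_splitOff (hmeet : G.CriticalIntersecting) {u w : {a // a ≠ v}}
    (hadm : ∀ Y P, v ∉ Y → v ∉ P → u.1 ∈ Y → w.1 ∈ Y →
      (G.iCount Y : ℤ) = 2 * Y.card - 2 → G.IsCritical P → (Y ∩ P).Nonempty) :
    ((G.deleteVertex v).addEdge u w).CriticalIntersecting := by
  set ι := Function.Embedding.subtype fun a : V => a ≠ v with hι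
  have hclass : ∀ X, ((G.deleteVertex v).addEdge u w).IsCritical X →
      (u ∈ X ∧ w ∈ X ∧ (G.iCount (X.map ι) : ℤ) = 2 * (X.map ι).card - 2) ∨
        G.IsCritical (X.map ι) := by
    intro X hX
    unfold IsCritical at hX ⊢
    rw [iCount_splitOff, ← hι] at hX
    rw [Finset.card_map]
    split_ifs at hX with h
    · exact Or.inl ⟨h.1, h.2, by push_cast at hX; omega⟩
    · exact Or.inr (by simpa using hX)
  have hmixed : ∀ X Y : Finset {a // a ≠ v}, u ∈ X → w ∈ X →
      (G.iCount (X.map ι) : ℤ) = 2 * (X.map ι).card - 2 → G.IsCritical (Y.map ι) →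
      (X ∩ Y).Nonempty := by
    intro X Y huX hwX hX hY
    have hv (Z : Finset {a // a ≠ v}) : v ∉ Z.map ι := fun h =>
      Finset.ne_of_mem_map_subtype h rfl
    have := hadm _ _ (hv X) (hv Y) ((Finset.mem_map' ι).2 huX) ((Finset.mem_map' ι).2 hwX) hX hY
    rw [← Finset.map_inter] at this
    exact Finset.map_nonempty.1 this
  intro X Y hX hY
  rcases hclass X hX with ⟨huX, hwX, hX'⟩ | hX' <;>
    rcases hclass Y hY with ⟨huY, hwY, hY'⟩ | hY'
  · exact ⟨u, Finset.mem_inter.2 ⟨huX, huY⟩⟩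
  · exact hmixed X Y huX hwX hX' hY'
  · exact Finset.inter_comm X Y ▸ hmixed Y X huY hwY hY' hX'
  · have := hmeet _ _ hX' hY'
    rw [← Finset.map_inter] at this
    exact Finset.map_nonempty.1 this

theorem isP21_splitOff [Fintype V] [DecidableEq E] (hT : G.Tight 2 1)
    (hmeet : G.CriticalIntersecting) (hinc : (G.incidenceFinset v).card = 3)
    {u w : {a // a ≠ v}} (hadm : G.IsAdmissiblePair v u w) :
    ((G.deleteVertex v).addEdge u w).IsP21 :=
  isP21_iff.2 ⟨tight_splitOff hT hinc hadm.not_isCritical,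
    criticalIntersecting_splitOff hmeet hadm.inter_nonempty⟩

end SplitOff

section Selection

variable [Fintype V] [Fintype E] [DecidableEq V] {G : Multigraph V E} {v : V}

theorem exists_isAdmissiblePair_of_notMem (hsp : G.Sparse 2 1) (hmeet : G.CriticalIntersecting)
    {C : Finset V} (hC : G.IsCritical C) (hCmin : ∀ X, G.IsCritical X → C ⊆ X) (hvC : v ∉ C)
    (hinc : (G.incidenceFinset v).card = 3) (hN : 1 < (G.neighborSet v).ncard)
    (hN3 : (G.neighborSet v).ncard ≤ 3) :
    ∃ a b, a ∈ G.neighborSet v ∧ b ∈ G.neighborSet v ∧ a ≠ b ∧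
      G.IsAdmissiblePair v a b := by
  obtain ⟨M, hM, hvM, hMmax⟩ :=
    exists_isCritical_forall_subset_of_notMem hsp hmeet ⟨C, hC, hvC⟩
  obtain ⟨a, haN, haM⟩ := exists_mem_neighborSet_notMem hsp hinc.ge hM hvM
  have hblock : ∀ x, ¬ G.IsAdmissiblePair v a x → ∃ Y, v ∉ Y ∧ a ∈ Y ∧ x ∈ Y ∧
      (G.iCount Y : ℤ) = 2 * Y.card - 2 ∧ Disjoint C Y := by
    intro x hx
    by_contra! hY
    refine hx ⟨fun Y hvY haY _ hY => haM (hMmax Y hY hvY haY),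
      fun Y P hvY hvP haY hxY hYc hP => ?_⟩
    by_contra hYP
    exact hY Y hvY haY hxY hYc ((Finset.disjoint_iff_inter_eq_empty.2
      (Finset.not_nonempty_iff_eq_empty.1 hYP)).symm.mono_left (hCmin P hP))
  obtain ⟨b, hbN, hba⟩ := Set.exists_ne_of_one_lt_ncard hN a
  obtain ⟨c, hcN, hca, hNabc⟩ :=
    Set.exists_mem_ne_subset_of_ncard_le_three hN3 haN hbN (Ne.symm hba)
  by_cases hab : G.IsAdmissiblePair v a b
  · exact ⟨a, b, haN, hbN, Ne.symm hba, hab⟩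
  by_cases hac : G.IsAdmissiblePair v a c
  · exact ⟨a, c, haN, hcN, Ne.symm hca, hac⟩
  exfalso
  obtain ⟨Y₁, hvY₁, haY₁, hbY₁, hY₁, hCY₁⟩ := hblock b hab
  obtain ⟨Y₂, hvY₂, haY₂, hcY₂, hY₂, hCY₂⟩ := hblock c hac
  have hnc : ¬ G.IsCritical (Y₁ ∩ Y₂) := fun h =>
    hC.nonempty.ne_empty ((Finset.disjoint_self_iff_empty _).1
      (hCY₁.mono_right ((hCmin _ h).trans Finset.inter_subset_left)))
  have hW := le_iCount_union hsp hY₁.ge hY₂.ge ⟨a, Finset.mem_inter.2 ⟨haY₁, haY₂⟩⟩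
    hnc
  have hNW : G.neighborSet v ⊆ ↑(Y₁ ∪ Y₂) := by
    refine hNabc.trans ?_
    simp [Set.insert_subset_iff, haY₁, hbY₁, hcY₂]
  have hcrit := isCritical_insert hsp hinc (by simp [hvY₁, hvY₂]) hNW hW
  obtain ⟨z, hz⟩ := hC.nonempty
  have hzW := Finset.mem_of_mem_insert_of_ne (hCmin _ hcrit hz) (fun h => hvC (h ▸ hz))
  rcases Finset.mem_union.1 hzW with h | h
  · exact Finset.disjoint_left.1 hCY₁ hz h
  · exact Finset.disjoint_left.1 hCY₂ hz h

theorem exists_isAdmissiblePair (hT : G.Tight 2 1) (hmeet : G.CriticalIntersecting)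
    (hinc : (G.incidenceFinset v).card = 3) (hN : 1 < (G.neighborSet v).ncard)
    (hN3 : (G.neighborSet v).ncard ≤ 3) :
    ∃ a b, a ∈ G.neighborSet v ∧ b ∈ G.neighborSet v ∧ a ≠ b ∧
      G.IsAdmissiblePair v a b := by
  obtain ⟨C, hC, hCmin⟩ := exists_isCritical_subset_forall hT hmeet
  by_cases hvC : v ∈ C
  · have hv : ∀ X, G.IsCritical X → v ∈ X := fun X hX => hCmin X hX hvC
    obtain ⟨a, b, ha, hb, hab⟩ := (Set.one_lt_ncard_iff).1 hN
    exact ⟨a, b, ha, hb, hab, fun Y hvY _ _ hY => hvY (hv Y hY),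
      fun _ P _ hvP _ _ _ hP => absurd (hv P hP) hvP⟩
  · exact exists_isAdmissiblePair_of_notMem hT.1 hmeet hC hCmin hvC hinc hN hN3

end Selection

end Multigraph

/-- In a `P(2,1)`-graph, every vertex `v` with `d(v) = 3` and
`|N(v)| > 1` is admissible. -/
theorem statement_13 {V E : Type} [Fintype V] [Fintype E] [DecidableEq V] [DecidableEq E]
    (G : Multigraph V E) (hG : G.IsP21) (v : V) (hdeg : G.degree v = 3)
    (hN : 1 < (G.neighborSet v).ncard) :
    ∃ u w : {a : V // a ≠ v}, (u : V) ∈ G.neighborSet v ∧ (w : V) ∈ G.neighborSet v ∧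
      u ≠ w ∧ ((G.deleteVertex v).addEdge u w).IsP21 := by
  obtain ⟨hT, hmeet⟩ := Multigraph.isP21_iff.1 hG
  have hloops := Multigraph.iCount_singleton_eq_zero hT hmeet hdeg
  have hinc : (G.incidenceFinset v).card = 3 := by
    rw [← hdeg, ← G.card_incidenceFinset_add_iCount_singleton v, hloops, add_zero]
  obtain ⟨a, b, haN, hbN, hab, hadm⟩ := Multigraph.exists_isAdmissiblePair hT hmeet hinc hN
    (hdeg ▸ G.ncard_neighborSet_le_degree v)
  have hvN := G.notMem_neighborSet_self v hloops
  exact ⟨⟨a, ne_of_mem_of_not_mem haN hvN⟩, ⟨b, ne_of_mem_of_not_mem hbN hvN⟩, haN, hbN,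
    fun h => hab (congrArg Subtype.val h), Multigraph.isP21_splitOff hT hmeet hinc hadm⟩
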